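/- arXiv:1304.2298 — 4 statements merged into one kernel-verified Lean document; each statement's English description precedes it below -/
import Mathlib

section
/- Let A ∈ SO(n−1), a ∈ ℝ^{n-1} with Aa = a and a ≠ 0, and c > 0. Define ũ_i(r) = c·√(‖Aⁱ − I‖² r² + i² ‖a‖²) for r ≥ 0 and i ∈ ℕ, where ‖·‖ on matrices is the operator norm, and B̃(r) = inf_{i∈ℕ} ũ_i(r). Then limsup_{r→∞} B̃(r)/r ≤ c·‖Aⁱ − I‖ for every i ∈ ℕ, and consequently B̃(r) = o(r) as r → ∞ (i.e., B̃(r)/r → 0). -/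
/-!
Each `ũ_j(r) / r` tends to `c ‖Aʲ − I‖` as `r → ∞`, so the infimum `B̃(r) / r` is eventually
trapped between `0` and `c ‖Aʲ − I‖ + ε`. Since the powers of `A` lie in the compact unit ball of
operators, two of them, `Aⁱ` and `Aⁱ⁺ᵏ`, are `ε`-close, and as `Aⁱ` is an isometry this means
`‖Aᵏ − I‖ < ε`; hence the bounds `c ‖Aʲ − I‖` get arbitrarily small.
-/

noncomputable section

abbrev E (m : ℕ) := EuclideanSpace ℝ (Fin m)

/-- Operator norm of Aⁱ − I. -/
def opDiff {m : ℕ} (A : E m ≃ₗᵢ[ℝ] E m) (i : ℕ) : ℝ :=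
  ‖((A ^ i).toContinuousLinearEquiv : E m →L[ℝ] E m) - 1‖

open Filter Topology

theorem IsCompact.exists_lt_dist_lt {X : Type*} [PseudoMetricSpace X] {K : Set X}
    (hK : IsCompact K) {x : ℕ → X} (hx : ∀ n, x n ∈ K) {ε : ℝ} (hε : 0 < ε) :
    ∃ i j, i < j ∧ dist (x i) (x j) < ε := by
  obtain ⟨_, -, φ, hφ, hlim⟩ := hK.tendsto_subseq hx
  obtain ⟨N, hN⟩ := Metric.cauchySeq_iff.1 hlim.cauchySeq ε hε
  exact ⟨φ N, φ (N + 1), hφ N.lt_succ_self, hN N le_rfl (N + 1) N.le_succ⟩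

namespace LinearIsometryEquiv

variable {F : Type*} [NormedAddCommGroup F] [NormedSpace ℝ F]

theorem norm_pow_add_sub_pow (A : F ≃ₗᵢ[ℝ] F) (i k : ℕ) :
    ‖((A ^ (i + k)).toContinuousLinearEquiv : F →L[ℝ] F) - (A ^ i).toContinuousLinearEquiv‖ =
      ‖((A ^ k).toContinuousLinearEquiv : F →L[ℝ] F) - 1‖ := by
  have hfactor : ((A ^ (i + k)).toContinuousLinearEquiv : F →L[ℝ] F) -
      ((A ^ i).toContinuousLinearEquiv : F →L[ℝ] F) =
      (A ^ i).toLinearIsometry.toContinuousLinearMap.comp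
        (((A ^ k).toContinuousLinearEquiv : F →L[ℝ] F) - 1) := by
    ext x
    simp [pow_add]
  rw [hfactor, LinearIsometry.norm_toContinuousLinearMap_comp]

theorem exists_norm_pow_sub_one_lt [FiniteDimensional ℝ F] (A : F ≃ₗᵢ[ℝ] F) {ε : ℝ}
    (hε : 0 < ε) : ∃ k : ℕ+, ‖((A ^ (k : ℕ)).toContinuousLinearEquiv : F →L[ℝ] F) - 1‖ < ε := by
  have hball : ∀ n : ℕ, ((A ^ n).toContinuousLinearEquiv : F →L[ℝ] F) ∈ Metric.closedBall 0 1 :=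
    fun n => mem_closedBall_zero_iff.2 (A ^ n).toLinearIsometry.norm_toContinuousLinearMap_le
  obtain ⟨i, j, hij, hdist⟩ := (isCompact_closedBall _ _).exists_lt_dist_lt hball hε
  obtain ⟨k, rfl⟩ := Nat.exists_eq_add_of_lt hij
  refine ⟨⟨k + 1, k.succ_pos⟩, ?_⟩
  rwa [dist_comm, dist_eq_norm, add_assoc, norm_pow_add_sub_pow] at hdist

end LinearIsometryEquiv

theorem tendsto_mul_sqrt_sq_mul_sq_add_div_atTop {d : ℝ} (hd : 0 ≤ d) (c e : ℝ) :
    Tendsto (fun r => c * √(d ^ 2 * r ^ 2 + e) / r) atTop (𝓝 (c * d)) := by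
  have hlim : Tendsto (fun r : ℝ => c * √(d ^ 2 + e / r ^ 2)) atTop (𝓝 (c * d)) := by
    have h := ((tendsto_const_nhds (x := d ^ 2)).add
      ((tendsto_const_nhds (x := e)).div_atTop (tendsto_pow_atTop two_ne_zero))).sqrt.const_mul c
    simpa [Real.sqrt_sq hd] using h
  refine hlim.congr' ?_
  filter_upwards [eventually_gt_atTop 0] with r hr
  rw [show d ^ 2 * r ^ 2 + e = (d ^ 2 + e / r ^ 2) * r ^ 2 by field_simp,
    Real.sqrt_mul' _ (by positivity), Real.sqrt_sq hr.le, ← mul_assoc, mul_div_cancel_right₀ _ hr.ne']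

section iInfDiv

variable {ι : Type*} {u : ι → ℝ → ℝ}

theorem eventually_iInf_div_mem_Icc (hu : ∀ j r, 0 ≤ u j r) (i : ι) :
    ∀ᶠ r in atTop, (⨅ j, u j r) / r ∈ Set.Icc 0 (u i r / r) := by
  filter_upwards [eventually_gt_atTop 0] with r hr
  have hbdd : BddBelow (Set.range fun j => u j r) := ⟨0, by rintro _ ⟨j, rfl⟩; exact hu j r⟩
  exact ⟨div_nonneg (Real.iInf_nonneg fun j => hu j r) hr.le,
    div_le_div_of_nonneg_right (ciInf_le hbdd i) hr.le⟩

theorem limsup_iInf_div_le (hu : ∀ j r, 0 ≤ u j r) {i : ι} {L : ℝ}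
    (hi : Tendsto (fun r => u i r / r) atTop (𝓝 L)) :
    limsup (fun r => (⨅ j, u j r) / r) atTop ≤ L := by
  have hmem := eventually_iInf_div_mem_Icc hu i
  have hcobdd : IsCoboundedUnder (· ≤ ·) atTop fun r => (⨅ j, u j r) / r :=
    IsBoundedUnder.isCoboundedUnder_le ⟨0, eventually_map.2 (hmem.mono fun _ h => h.1)⟩
  calc limsup (fun r => (⨅ j, u j r) / r) atTop
      ≤ limsup (fun r => u i r / r) atTop :=
        limsup_le_limsup (hmem.mono fun _ h => h.2) hcobdd hi.isBoundedUnder_le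
    _ = L := hi.limsup_eq

theorem tendsto_iInf_div_atTop_zero (hu : ∀ j r, 0 ≤ u j r) {L : ι → ℝ}
    (hL : ∀ j, Tendsto (fun r => u j r / r) atTop (𝓝 (L j)))
    (hsmall : ∀ ε > 0, ∃ j, L j < ε) :
    Tendsto (fun r => (⨅ j, u j r) / r) atTop (𝓝 0) := by
  refine tendsto_order.2 ⟨fun ε hε => ?_, fun ε hε => ?_⟩
  · obtain ⟨i, -⟩ := hsmall 1 one_pos
    exact (eventually_iInf_div_mem_Icc hu i).mono fun _ h => hε.trans_le h.1
  · obtain ⟨i, hi⟩ := hsmall ε hε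
    filter_upwards [eventually_iInf_div_mem_Icc hu i, (hL i).eventually_lt_const hi] with r h h'
    exact h.2.trans_lt h'

end iInfDiv

theorem boundary_function_sublinear_general {m : ℕ} (A : E m ≃ₗᵢ[ℝ] E m)
    (a : E m) (c : ℝ) (hc : 0 < c) :
    (∀ i : ℕ+,
      Filter.limsup
        (fun r : ℝ =>
          (⨅ j : ℕ+, c * Real.sqrt ((opDiff A j) ^ 2 * r ^ 2 + (j : ℝ) ^ 2 * ‖a‖ ^ 2)) / r)
        Filter.atTop ≤ c * opDiff A i) ∧
    Filter.Tendsto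
      (fun r : ℝ =>
        (⨅ j : ℕ+, c * Real.sqrt ((opDiff A j) ^ 2 * r ^ 2 + (j : ℝ) ^ 2 * ‖a‖ ^ 2)) / r)
      Filter.atTop (nhds 0) := by
  have hu : ∀ (j : ℕ+) (r : ℝ),
      0 ≤ c * √((opDiff A j) ^ 2 * r ^ 2 + (j : ℝ) ^ 2 * ‖a‖ ^ 2) :=
    fun _ _ => mul_nonneg hc.le (Real.sqrt_nonneg _)
  have hlim : ∀ j : ℕ+, Tendsto
      (fun r => c * √((opDiff A j) ^ 2 * r ^ 2 + (j : ℝ) ^ 2 * ‖a‖ ^ 2) / r) atTop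
      (𝓝 (c * opDiff A j)) :=
    fun j => tendsto_mul_sqrt_sq_mul_sq_add_div_atTop (norm_nonneg _) _ _
  refine ⟨fun i => limsup_iInf_div_le hu (hlim i), tendsto_iInf_div_atTop_zero hu hlim ?_⟩
  intro ε hε
  obtain ⟨k, hk⟩ := A.exists_norm_pow_sub_one_lt (div_pos hε hc)
  exact ⟨k, (lt_div_iff₀' hc).1 hk⟩

/-- With ũ_i(r) = c√(‖Aⁱ−I‖²r² + i²‖a‖²) and B̃(r) = inf_i ũ_i(r):
limsup_{r→∞} B̃(r)/r ≤ c‖Aⁱ−I‖ for every i, and consequently B̃(r) = o(r). -/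
theorem boundary_function_sublinear {m : ℕ} (A : E m ≃ₗᵢ[ℝ] E m)
    (hdet : LinearMap.det (A.toLinearEquiv : E m →ₗ[ℝ] E m) = 1)
    (a : E m) (hAa : A a = a) (ha : a ≠ 0) (c : ℝ) (hc : 0 < c) :
    (∀ i : ℕ+,
      Filter.limsup
        (fun r : ℝ =>
          (⨅ j : ℕ+, c * Real.sqrt ((opDiff A j) ^ 2 * r ^ 2 + (j : ℝ) ^ 2 * ‖a‖ ^ 2)) / r)
        Filter.atTop ≤ c * opDiff A i) ∧
    Filter.Tendsto
      (fun r : ℝ =>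
        (⨅ j : ℕ+, c * Real.sqrt ((opDiff A j) ^ 2 * r ^ 2 + (j : ℝ) ^ 2 * ‖a‖ ^ 2)) / r)
      Filter.atTop (nhds 0) :=
  boundary_function_sublinear_general A a c hc
end
end

section
/- Suppose g, h generate a discrete subgroup of Isom⁺(ℍⁿ), g is parabolic fixing ∞ with h(∞) ≠ ∞, and suppose R_h > B_g(v_h). Let σ be the vertical geodesic segment from the north pole N_h = (v_h, R_h) down to (v_h, B_g(v_h)), lying in T_g. Then h(σ) is the vertical geodesic segment from N_{h^{-1}} = (v_{h^{-1}}, R_h) up to (v_{h^{-1}}, t) with t = R_h²/B_g(v_h), and disjointness h(T_g) ∩ T_g = ∅ forces t ≤ B_g(v_{h^{-1}}), hence R_h² ≤ B_g(v_h)·B_g(v_{h^{-1}}). -/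
noncomputable section

/-- The boundary function B_g(v) = inf_{i∈ℕ} c(ε)‖gⁱ(v) − v‖ of the parabolic
isometry g(v,t) = (Av + a, t), with c(ε) = 1/√(2cosh ε − 2). -/
def bdry {m : ℕ} (A : E m ≃ₗᵢ[ℝ] E m) (a : E m) (ε : ℝ) (v : E m) : ℝ :=
  ⨅ i : ℕ+, (1 / Real.sqrt (2 * Real.cosh ε - 2)) *
    ‖(fun u : E m => A u + a)^[(i : ℕ)] v - v‖

def Tg {m : ℕ} (A : E m ≃ₗᵢ[ℝ] E m) (a : E m) (ε : ℝ) : Set (E m × ℝ) :=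
  {x : E m × ℝ | bdry A a ε x.1 < x.2}

/-! The inversion `s ↦ R² / s` of a vertical geodesic reverses heights, so it maps the segment
`[B, R]` onto `[R, R² / B]`; the disjointness of `h(T_g)` and `T_g` bounds the height of each
image point `(v_{h⁻¹}, R² / s)` with `s > B_g(v_h)` by `B_g(v_{h⁻¹})`, and letting `s ↓ B_g(v_h)`
gives `R² / B_g(v_h) ≤ B_g(v_{h⁻¹})`. -/

theorem Set.image_singleton_prod_eq {α β γ δ : Type*} {f : α × β → γ × δ} {φ : β → δ}
    {a : α} {c : γ} {s : Set β} (hf : ∀ b ∈ s, f (a, b) = (c, φ b)) :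
    f '' ({a} ×ˢ s) = {c} ×ˢ (φ '' s) := by
  rw [Set.singleton_prod, Set.singleton_prod, Set.image_image, Set.image_image]
  exact Set.image_congr hf

section OrderedField

variable {K : Type*} [Field K] [LinearOrder K] [IsStrictOrderedRing K]

theorem Set.image_const_div_Icc_of_pos {c b d : K} (hc : 0 < c) (hb : 0 < b) (hd : 0 < d) :
    (c / ·) '' Set.Icc b d = Set.Icc (c / d) (c / b) := by
  ext y
  constructor
  · rintro ⟨x, ⟨hbx, hxd⟩, rfl⟩
    exact ⟨div_le_div_of_nonneg_left hc.le (hb.trans_le hbx) hxd,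
      div_le_div_of_nonneg_left hc.le hb hbx⟩
  · rintro ⟨hdy, hyb⟩
    have hy : 0 < y := (div_pos hc hd).trans_le hdy
    exact ⟨c / y, ⟨(le_div_comm₀ hy hb).1 hyb, (div_le_comm₀ hd hy).1 hdy⟩,
      div_div_cancel₀ hc.ne'⟩

theorem div_le_of_forall_lt_div_le {a b c : K} (ha : 0 < a) (hb : 0 < b)
    (h : ∀ s, b < s → a / s ≤ c) : a / b ≤ c := by
  have hc : 0 < c := (div_pos ha (hb.trans (lt_add_one b))).trans_le (h _ (lt_add_one b))
  rw [div_le_comm₀ hb hc]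
  exact le_of_forall_gt_imp_ge_of_dense fun s hs =>
    (div_le_comm₀ (hb.trans hs) hc).1 (h s hs)

end OrderedField

theorem key_step_criterion_general {m : ℕ} (A : E m ≃ₗᵢ[ℝ] E m) (a : E m)
    (ε : ℝ) (h : E m × ℝ → E m × ℝ)
    (vh vh' : E m) (R : ℝ) (hR : 0 < R)
    (hgeo : ∀ s : ℝ, 0 < s → h (vh, s) = (vh', R ^ 2 / s))
    (hBpos : 0 < bdry A a ε vh)
    (hdisj : ∀ x ∈ Tg A a ε, h x ∉ Tg A a ε) :
    h '' {x : E m × ℝ | x.1 = vh ∧ x.2 ∈ Set.Icc (bdry A a ε vh) R}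
        = {x : E m × ℝ | x.1 = vh' ∧ x.2 ∈ Set.Icc R (R ^ 2 / bdry A a ε vh)} ∧
    R ^ 2 / bdry A a ε vh ≤ bdry A a ε vh' ∧
    R ^ 2 ≤ bdry A a ε vh * bdry A a ε vh' := by
  have hR2 : 0 < R ^ 2 := by positivity
  have hsegment : h '' ({vh} ×ˢ Set.Icc (bdry A a ε vh) R)
      = {vh'} ×ˢ Set.Icc R (R ^ 2 / bdry A a ε vh) := by
    rw [Set.image_singleton_prod_eq fun s hs => hgeo s (hBpos.trans_le hs.1),
      Set.image_const_div_Icc_of_pos hR2 hBpos hR, sq, mul_self_div_self]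
  have himage_height : ∀ s, bdry A a ε vh < s → R ^ 2 / s ≤ bdry A a ε vh' := fun s hs => by
    simpa [Tg, hgeo s (hBpos.trans hs)] using hdisj (vh, s) hs
  have hbound := div_le_of_forall_lt_div_le hR2 hBpos himage_height
  exact ⟨hsegment, hbound, (div_le_iff₀' hBpos).1 hbound⟩

/-- Key step of the discreteness criterion.  Suppose R_h > B_g(v_h) and h carries
the vertical geodesic over v_h to the one over v_{h⁻¹} via h(v_h,s) = (v_{h⁻¹}, R_h²/s).
Then h maps the vertical segment σ from N_h = (v_h,R_h) down to (v_h, B_g(v_h))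
onto the vertical segment from N_{h⁻¹} = (v_{h⁻¹},R_h) up to (v_{h⁻¹}, t) with
t = R_h²/B_g(v_h); and the disjointness h(T_g) ∩ T_g = ∅ forces
t ≤ B_g(v_{h⁻¹}), hence R_h² ≤ B_g(v_h)·B_g(v_{h⁻¹}). -/
theorem key_step_criterion {m : ℕ} (A : E m ≃ₗᵢ[ℝ] E m) (a : E m) (ha : a ≠ 0)
    (ε : ℝ) (hε : 0 < ε) (h : E m × ℝ → E m × ℝ)
    (vh vh' : E m) (R : ℝ) (hR : 0 < R)
    (hgeo : ∀ s : ℝ, 0 < s → h (vh, s) = (vh', R ^ 2 / s))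
    (hBpos : 0 < bdry A a ε vh) (hRB : bdry A a ε vh < R)
    (hdisj : ∀ x ∈ Tg A a ε, h x ∉ Tg A a ε) :
    h '' {x : E m × ℝ | x.1 = vh ∧ x.2 ∈ Set.Icc (bdry A a ε vh) R}
        = {x : E m × ℝ | x.1 = vh' ∧ x.2 ∈ Set.Icc R (R ^ 2 / bdry A a ε vh)} ∧
    R ^ 2 / bdry A a ε vh ≤ bdry A a ε vh' ∧
    R ^ 2 ≤ bdry A a ε vh * bdry A a ε vh' :=
  key_step_criterion_general A a ε h vh vh' R hR hgeo hBpos hdisj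
end
end

section
/- Let α be irrational and c > 0. Define u_i(r) = c·√(4 sin²(π i α) r² + i²) for i ∈ ℕ and r ≥ 0, and B(r) = inf_{i∈ℕ} u_i(r). Then B(r)/r → 0 as r → ∞. -/
/-!
Dirichlet's approximation theorem gives, for every `ε > 0`, an index `i` with `i α` within `ε` of
an integer, hence `|sin (π i α)| ≤ π ε`. Bounding the infimum by its `i`-th term and using
`√(4 sin² (π i α) r² + i²) ≤ 2 |sin (π i α)| r + i` gives `limsup B(r) / r ≤ 2 c |sin (π i α)|`,
which is therefore arbitrarily small.
-/

noncomputable section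
open Real Filter Topology

theorem abs_sin_pi_mul_le (x : ℝ) (m : ℤ) : |sin (π * x)| ≤ π * |x - m| :=
  calc |sin (π * x)| = |sin (π * (x - m))| := by
        rw [mul_sub, mul_comm π (m : ℝ), sin_sub_int_mul_pi, abs_mul, abs_neg_one_zpow, one_mul]
    _ ≤ |π * (x - m)| := abs_sin_le_abs
    _ = π * |x - m| := by rw [abs_mul, abs_of_pos pi_pos]

theorem exists_pnat_abs_sin_pi_mul_lt (α : ℝ) {ε : ℝ} (hε : 0 < ε) :
    ∃ i : ℕ+, |sin (π * i * α)| < ε := by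
  obtain ⟨n, hn⟩ := exists_nat_gt (π / ε)
  have hn₀ : 0 < n := by exact_mod_cast (div_pos pi_pos hε).trans hn
  obtain ⟨k, hk₀, -, hk⟩ := Real.exists_nat_abs_mul_sub_round_le α hn₀
  refine ⟨⟨k, hk₀⟩, ?_⟩
  calc |sin (π * k * α)| ≤ π * |k * α - round (k * α)| := by
        rw [mul_assoc]; exact abs_sin_pi_mul_le _ _
    _ ≤ π * (1 / (n + 1)) := by gcongr
    _ < ε := by
        rw [mul_one_div, div_lt_iff₀ (by positivity)]
        rw [div_lt_iff₀ hε] at hn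
        linarith

def screwBoundary (α c r : ℝ) : ℝ :=
  ⨅ i : ℕ+, c * √(4 * sin (π * i * α) ^ 2 * r ^ 2 + (i : ℝ) ^ 2)

section
variable {α c r : ℝ}

theorem screwBoundary_nonneg (hc : 0 ≤ c) : 0 ≤ screwBoundary α c r :=
  Real.iInf_nonneg fun _ => by positivity

theorem screwBoundary_div_le (hc : 0 ≤ c) (hr : 0 < r) (i : ℕ+) :
    screwBoundary α c r / r ≤ 2 * c * |sin (π * i * α)| + c * i / r := by
  set s := |sin (π * i * α)|
  have hsqrt : √(4 * sin (π * i * α) ^ 2 * r ^ 2 + (i : ℝ) ^ 2) ≤ 2 * s * r + i := by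
    refine sqrt_le_iff.2 ⟨by positivity, ?_⟩
    rw [← sq_abs (sin _)]
    have hsri : 0 ≤ s * r * i := by positivity
    nlinarith
  have hbdd : BddBelow (Set.range fun j : ℕ+ =>
      c * √(4 * sin (π * j * α) ^ 2 * r ^ 2 + (j : ℝ) ^ 2)) :=
    ⟨0, Set.forall_mem_range.2 fun _ => by positivity⟩
  calc screwBoundary α c r / r ≤ c * (2 * s * r + i) / r := by
        gcongr
        exact (ciInf_le hbdd i).trans (mul_le_mul_of_nonneg_left hsqrt hc)
    _ = 2 * c * s + c * i / r := by field_simp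
end

theorem screw_boundary_sublinear_general (α : ℝ) (c : ℝ) (hc : 0 < c) :
    Filter.Tendsto
      (fun r : ℝ =>
        (⨅ i : ℕ+, c * Real.sqrt (4 * Real.sin (π * i * α) ^ 2 * r ^ 2 + (i : ℝ) ^ 2)) / r)
      Filter.atTop (nhds 0) := by
  change Tendsto (fun r => screwBoundary α c r / r) atTop (𝓝 0)
  refine tendsto_order.2 ⟨fun a ha => ?_, fun a ha => ?_⟩
  · filter_upwards [eventually_gt_atTop 0] with r hr
    exact ha.trans_le (div_nonneg (screwBoundary_nonneg hc.le) hr.le)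
  · obtain ⟨i, hi⟩ := exists_pnat_abs_sin_pi_mul_lt α (div_pos ha (mul_pos two_pos hc))
    have hlim : Tendsto (fun r => 2 * c * |sin (π * i * α)| + c * i / r) atTop
        (𝓝 (2 * c * |sin (π * i * α)| + 0)) :=
      tendsto_const_nhds.add (tendsto_const_nhds.div_atTop tendsto_id)
    have hlt : 2 * c * |sin (π * i * α)| + 0 < a := by
      rwa [add_zero, ← lt_div_iff₀' (mul_pos two_pos hc)]
    filter_upwards [hlim.eventually (gt_mem_nhds hlt), eventually_gt_atTop 0] with r hr hr₀
    exact (screwBoundary_div_le hc.le hr₀ i).trans_lt hr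

/-- For irrational α and c > 0, the boundary function
B(r) = inf_{i∈ℕ} c√(4 sin²(πiα) r² + i²) of the screw translation
g(r,θ,z,t) = (r, θ+2πα, z+1, t) satisfies B(r)/r → 0 as r → ∞. -/
theorem screw_boundary_sublinear (α : ℝ) (hα : Irrational α) (c : ℝ) (hc : 0 < c) :
    Filter.Tendsto
      (fun r : ℝ =>
        (⨅ i : ℕ+, c * Real.sqrt (4 * Real.sin (π * i * α) ^ 2 * r ^ 2 + (i : ℝ) ^ 2)) / r)
      Filter.atTop (nhds 0) :=
  screw_boundary_sublinear_general α c hc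
end
end

section
/- Let α be a Diophantine irrational of exponent ν ≥ 2, i.e., there exists c₀ > 0 with dist(iα, ℤ) ≥ c₀ / i^{ν−1} for all i ∈ ℕ. Then there exist constants c₁ > 0 and r₀ such that inf_{i∈ℕ} √(4 sin²(π i α) r² + i²) ≥ c₁ · r^{1/(2ν−2)} for all r ≥ r₀. -/
/-!
Since |sin(πx)| ≥ 2·dist(x, ℤ), the i-th term of the infimum is at least
max(4c₀r/i^(ν-1), i), and balancing the two entries gives the bound (4c₀r)^(1/ν) for every i.
For r ≥ 1 this dominates (4c₀)^(1/ν)·r^(1/(2ν-2)) because ν ≤ 2ν - 2.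
-/

open Real

theorem two_mul_abs_sub_round_le_abs_sin_pi_mul (x : ℝ) :
    2 * |x - round x| ≤ |sin (π * x)| := by
  have hsin : |sin (π * (x - round x))| = |sin (π * x)| := by
    rw [mul_sub, mul_comm π (round x : ℝ), sin_sub_int_mul_pi, abs_mul, abs_zpow, abs_neg,
      abs_one, one_zpow, one_mul]
  have hjordan : |π * (x - round x)| ≤ π / 2 := by
    rw [abs_mul, abs_of_pos pi_pos]
    nlinarith [abs_sub_round x, pi_pos]
  calc 2 * |x - round x| = 2 / π * |π * (x - round x)| := by
        rw [abs_mul, abs_of_pos pi_pos]; field_simp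
    _ ≤ |sin (π * x)| := hsin ▸ mul_abs_le_abs_sin hjordan

theorem rpow_inv_add_one_le_max_div_rpow {s x p : ℝ} (hs : 0 ≤ s) (hx : 0 < x) (hp : 0 ≤ p) :
    s ^ (p + 1)⁻¹ ≤ max (s / x ^ p) x := by
  set t := s ^ (p + 1)⁻¹
  have ht : 0 ≤ t := rpow_nonneg hs _
  have hts : t ^ p * t = s := by
    rw [← rpow_add_one' ht (by positivity), ← rpow_mul hs,
      inv_mul_cancel₀ (by positivity), rpow_one]
  rcases le_or_gt t x with htx | hxt
  · exact le_max_of_le_right htx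
  · refine le_max_of_le_left ((le_div_iff₀ (rpow_pos_of_pos hx p)).2 ?_)
    calc t * x ^ p ≤ t * t ^ p := by gcongr
      _ = s := by rw [mul_comm, hts]

theorem max_le_sqrt_sq_add_sq (a b : ℝ) : max |a| |b| ≤ √(a ^ 2 + b ^ 2) :=
  max_le (abs_le_sqrt (by nlinarith)) (abs_le_sqrt (by nlinarith))

theorem rpow_inv_le_sqrt_of_le_abs_sub_round {α c p r x : ℝ} (hc : 0 ≤ c) (hp : 0 ≤ p)
    (hr : 0 ≤ r) (hx : 0 < x) (hdio : c / x ^ p ≤ |x * α - round (x * α)|) :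
    (4 * c * r) ^ (p + 1)⁻¹ ≤ √(4 * sin (π * x * α) ^ 2 * r ^ 2 + x ^ 2) := by
  have hsin : 4 * c * r / x ^ p ≤ |2 * sin (π * x * α) * r| := by
    have hround := two_mul_abs_sub_round_le_abs_sin_pi_mul (x * α)
    rw [← mul_assoc] at hround
    rw [abs_mul, abs_mul, abs_of_nonneg hr, abs_two]
    calc 4 * c * r / x ^ p = 2 * (2 * (c / x ^ p)) * r := by ring
      _ ≤ 2 * |sin (π * x * α)| * r := by gcongr; linarith
  calc (4 * c * r) ^ (p + 1)⁻¹ ≤ max (4 * c * r / x ^ p) x :=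
        rpow_inv_add_one_le_max_div_rpow (by positivity) hx hp
    _ ≤ max |2 * sin (π * x * α) * r| |x| := max_le_max hsin (le_abs_self x)
    _ ≤ √((2 * sin (π * x * α) * r) ^ 2 + x ^ 2) := max_le_sqrt_sq_add_sq _ _
    _ = √(4 * sin (π * x * α) ^ 2 * r ^ 2 + x ^ 2) := by ring_nf

theorem screw_boundary_diophantine_lower_bound_general (α : ℝ)
    (ν : ℝ) (hν : 2 ≤ ν) (c₀ : ℝ) (hc₀ : 0 < c₀)
    (hdio : ∀ i : ℕ+, c₀ / (i : ℝ) ^ (ν - 1) ≤ |(i : ℝ) * α - round ((i : ℝ) * α)|) :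
    ∃ c₁ : ℝ, 0 < c₁ ∧ ∃ r₀ : ℝ, ∀ r : ℝ, r₀ ≤ r →
      c₁ * r ^ (1 / (2 * ν - 2)) ≤
        ⨅ i : ℕ+, Real.sqrt (4 * Real.sin (π * i * α) ^ 2 * r ^ 2 + (i : ℝ) ^ 2) := by
  refine ⟨(4 * c₀) ^ ν⁻¹, by positivity, 1, fun r hr => le_ciInf fun i => ?_⟩
  have hexp : 1 / (2 * ν - 2) ≤ ν⁻¹ := by
    rw [one_div]; exact inv_anti₀ (by linarith) (by linarith)
  calc (4 * c₀) ^ ν⁻¹ * r ^ (1 / (2 * ν - 2)) ≤ (4 * c₀) ^ ν⁻¹ * r ^ ν⁻¹ := by gcongr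
    _ = (4 * c₀ * r) ^ (ν - 1 + 1)⁻¹ := by
        rw [sub_add_cancel, ← mul_rpow (by positivity) (by linarith)]
    _ ≤ _ := rpow_inv_le_sqrt_of_le_abs_sub_round hc₀.le (by linarith) (by linarith)
        (by positivity) (hdio i)

/-- Diophantine lower bound: if α is Diophantine of exponent ν ≥ 2, i.e.
dist(iα, ℤ) ≥ c₀/i^{ν−1} for all i ∈ ℕ, then there are c₁ > 0 and r₀ with
inf_{i∈ℕ} √(4 sin²(πiα) r² + i²) ≥ c₁ r^{1/(2ν−2)} for all r ≥ r₀. -/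
theorem screw_boundary_diophantine_lower_bound (α : ℝ) (hα : Irrational α)
    (ν : ℝ) (hν : 2 ≤ ν) (c₀ : ℝ) (hc₀ : 0 < c₀)
    (hdio : ∀ i : ℕ+, c₀ / (i : ℝ) ^ (ν - 1) ≤ |(i : ℝ) * α - round ((i : ℝ) * α)|) :
    ∃ c₁ : ℝ, 0 < c₁ ∧ ∃ r₀ : ℝ, ∀ r : ℝ, r₀ ≤ r →
      c₁ * r ^ (1 / (2 * ν - 2)) ≤
        ⨅ i : ℕ+, Real.sqrt (4 * Real.sin (π * i * α) ^ 2 * r ^ 2 + (i : ℝ) ^ 2) :=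
  screw_boundary_diophantine_lower_bound_general α ν hν c₀ hc₀ hdio
end
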